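/- For two probability measures μ and ν on ℝ with finite second moments, the squared 2-Wasserstein distance between μ and ν equals the squared L²(0,1) norm of the difference of their quantile functions: W₂²(μ,ν) = ∫₀¹ |F_μ⁻¹(t) − F_ν⁻¹(t)|² dt. -/

import Mathlib

/-!
With `d_p(s) = 𝟙{s < p.1} - 𝟙{s < p.2}` one has `(p.1 - p.2)² = ∬ d_p(s) d_p(t) ds dt`, so by
Fubini the cost `∫ (x - y)² dγ` of a plan `γ` is the `ds dt`-integral of `E_γ[d(s) d(t)]`. This
expectation is a sum of terms depending only on the marginals, minus
`γ(X > s, Y > t) + γ(X > t, Y > s)`. So among couplings of `μ` and `ν` the cost can only drop when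
the upper-quadrant probabilities grow. These are bounded by `min (μ (s, ∞)) (ν (t, ∞))`, and the
comonotone coupling `u ↦ (F_μ⁻¹ u, F_ν⁻¹ u)`, `u` uniform on `(0, 1)`, attains this bound; its cost
is `∫₀¹ (F_μ⁻¹ - F_ν⁻¹)²`.
-/

open MeasureTheory ProbabilityTheory Real Set
open scoped ENNReal NNReal

noncomputable section

/-- Quantile (generalized inverse CDF) of a measure on `ℝ`. -/
def quantile (μ : Measure ℝ) (t : ℝ) : ℝ :=
  sInf {x : ℝ | ENNReal.ofReal t ≤ μ (Set.Iic x)}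

/-- Squared 2-Wasserstein distance on `ℝ`, via the 1D quantile-function formula. -/
def W2sq (μ ν : Measure ℝ) : ℝ :=
  ∫ t in Set.Ioo (0:ℝ) 1, (quantile μ t - quantile ν t)^2

/-- Empirical measure of `n` real points. -/
def empMeasure {n : ℕ} (X : Fin n → ℝ) : Measure ℝ :=
  ((n : ℝ≥0∞))⁻¹ • ∑ i, Measure.dirac (X i)

/-- `k`-th order statistic (`k : Fin n`, so `ordStat X k` is the `(k+1)`-th smallest). -/
def ordStat {n : ℕ} (X : Fin n → ℝ) (k : Fin n) : ℝ :=
  quantile (empMeasure X) (((k : ℕ) + 1 : ℝ) / n)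

/-- Continuous uniform distribution on the interval `(a, b]`. -/
def unif (a b : ℝ) : Measure ℝ :=
  (ENNReal.ofReal (b - a))⁻¹ • volume.restrict (Set.Ioc a b)

/-- Squared 2-Wasserstein distance as infimum over couplings. -/
def W2sqCoupling (μ ν : Measure ℝ) : ℝ :=
  sInf {c : ℝ | ∃ γ : Measure (ℝ × ℝ), IsProbabilityMeasure γ ∧
    γ.map Prod.fst = μ ∧ γ.map Prod.snd = ν ∧ c = ∫ p, (p.1 - p.2)^2 ∂γ}

instance : IsProbabilityMeasure (volume.restrict (Ioo (0 : ℝ) 1)) :=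
  ⟨by simp⟩

section Quantile

variable (μ : Measure ℝ)

lemma nonempty_setOf_le_cdf {t : ℝ} (ht : t < 1) : {x | t ≤ cdf μ x}.Nonempty :=
  ((tendsto_cdf_atTop μ).eventually (eventually_ge_nhds ht)).exists

lemma bddBelow_setOf_le_cdf {t : ℝ} (ht : 0 < t) : BddBelow {x | t ≤ cdf μ x} := by
  obtain ⟨x₀, hx₀⟩ := ((tendsto_cdf_atBot μ).eventually (eventually_lt_nhds ht)).exists
  exact ⟨x₀, fun y hy => ((monotone_cdf μ).reflect_lt (hx₀.trans_le hy)).le⟩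

variable [IsProbabilityMeasure μ]

lemma quantile_eq_sInf_cdf (t : ℝ) : quantile μ t = sInf {x | t ≤ cdf μ x} := by
  simp only [quantile, ← ofReal_cdf, ENNReal.ofReal_le_ofReal_iff (cdf_nonneg μ _)]

lemma quantile_le_iff {t x : ℝ} (ht0 : 0 < t) (ht1 : t < 1) :
    quantile μ t ≤ x ↔ t ≤ cdf μ x := by
  rw [quantile_eq_sInf_cdf]
  refine ⟨fun h => ?_, fun h => csInf_le (bddBelow_setOf_le_cdf μ ht0) h⟩
  -- the infimum is attained, by right continuity of the cdf
  have hmem : t ≤ cdf μ (sInf {x | t ≤ cdf μ x}) := by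
    refine ge_of_tendsto (((cdf μ).right_continuous _).mono Ioi_subset_Ici_self) ?_
    filter_upwards [self_mem_nhdsWithin] with y hy
    obtain ⟨z, hz, hzy⟩ := exists_lt_of_csInf_lt (nonempty_setOf_le_cdf μ ht1) hy
    exact hz.trans (monotone_cdf μ hzy.le)
  exact hmem.trans (monotone_cdf μ h)

lemma lt_quantile_iff {t x : ℝ} (ht0 : 0 < t) (ht1 : t < 1) :
    x < quantile μ t ↔ cdf μ x < t := by
  simpa only [not_le] using (quantile_le_iff μ ht0 ht1).not

lemma monotoneOn_quantile : MonotoneOn (quantile μ) (Ioo 0 1) := fun _ hs _ ht hst =>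
  (quantile_le_iff μ hs.1 hs.2).2 <| hst.trans ((quantile_le_iff μ ht.1 ht.2).1 le_rfl)

lemma aemeasurable_quantile : AEMeasurable (quantile μ) (volume.restrict (Ioo 0 1)) :=
  aemeasurable_restrict_of_monotoneOn measurableSet_Ioo (monotoneOn_quantile μ)

lemma preimage_quantile_Ioi_inter_Ioo (x : ℝ) :
    quantile μ ⁻¹' Ioi x ∩ Ioo 0 1 = Ioo (cdf μ x) 1 := by
  ext u
  simp only [mem_inter_iff, mem_preimage, mem_Ioi, mem_Ioo]
  constructor
  · rintro ⟨h, h0, h1⟩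
    exact ⟨(lt_quantile_iff μ h0 h1).1 h, h1⟩
  · rintro ⟨h, h1⟩
    have h0 := (cdf_nonneg μ x).trans_lt h
    exact ⟨(lt_quantile_iff μ h0 h1).2 h, h0, h1⟩

lemma measure_Ioi_eq_ofReal_one_sub_cdf (x : ℝ) : μ (Ioi x) = ENNReal.ofReal (1 - cdf μ x) := by
  rw [← compl_Iic, prob_compl_eq_one_sub measurableSet_Iic, ← ofReal_cdf,
    ENNReal.ofReal_sub _ (cdf_nonneg μ x), ENNReal.ofReal_one]

lemma map_quantile : (volume.restrict (Ioo 0 1)).map (quantile μ) = μ := by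
  have := Measure.isProbabilityMeasure_map (μ := volume.restrict (Ioo (0 : ℝ) 1))
    (aemeasurable_quantile μ)
  have hIoi (x : ℝ) : (volume.restrict (Ioo 0 1)).map (quantile μ) (Ioi x) = μ (Ioi x) := by
    rw [Measure.map_apply_of_aemeasurable (aemeasurable_quantile μ) measurableSet_Ioi,
      Measure.restrict_apply' measurableSet_Ioo, preimage_quantile_Ioi_inter_Ioo, Real.volume_Ioo,
      measure_Ioi_eq_ofReal_one_sub_cdf]
  refine Measure.ext_of_Iic _ _ fun x => ?_
  rw [← compl_Ioi, prob_compl_eq_one_sub measurableSet_Ioi, prob_compl_eq_one_sub measurableSet_Ioi,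
    hIoi]

end Quantile

def cutDiff (p : ℝ × ℝ) (s : ℝ) : ℝ := (if s < p.1 then 1 else 0) - if s < p.2 then 1 else 0

lemma cutDiff_eq_indicator (p : ℝ × ℝ) :
    cutDiff p = (Ico p.2 p.1).indicator 1 - (Ico p.1 p.2).indicator 1 := by
  ext s
  simp only [cutDiff, Pi.sub_apply, indicator_apply, mem_Ico, Pi.one_apply]
  split_ifs <;> grind

lemma abs_cutDiff (p : ℝ × ℝ) (s : ℝ) : |cutDiff p s| = cutDiff (max p.1 p.2, min p.1 p.2) s := by
  simp only [cutDiff, lt_max_iff, lt_min_iff]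
  split_ifs <;> grind

lemma integrable_indicator_one_Ico (a b : ℝ) : Integrable ((Ico a b).indicator (1 : ℝ → ℝ)) :=
  (integrableOn_const measure_Ico_lt_top.ne).integrable_indicator measurableSet_Ico

lemma integrable_cutDiff (p : ℝ × ℝ) : Integrable (cutDiff p) := by
  rw [cutDiff_eq_indicator]
  exact (integrable_indicator_one_Ico _ _).sub (integrable_indicator_one_Ico _ _)

lemma integral_cutDiff (p : ℝ × ℝ) : ∫ s, cutDiff p s = p.1 - p.2 := by
  simp only [cutDiff_eq_indicator, Pi.sub_apply]
  rw [integral_sub (integrable_indicator_one_Ico _ _) (integrable_indicator_one_Ico _ _),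
    integral_indicator_one measurableSet_Ico, integral_indicator_one measurableSet_Ico,
    Real.volume_real_Ico, Real.volume_real_Ico]
  rcases le_total p.1 p.2 with h | h
  · rw [max_eq_right (by linarith), max_eq_left (by linarith)]; ring
  · rw [max_eq_left (by linarith), max_eq_right (by linarith)]; ring

lemma integral_abs_cutDiff (p : ℝ × ℝ) : ∫ s, |cutDiff p s| = |p.1 - p.2| := by
  simp only [abs_cutDiff, integral_cutDiff, max_sub_min_eq_abs, abs_sub_comm]

lemma measurable_uncurry_cutDiff : Measurable (Function.uncurry cutDiff) := by
  have hlt (f : (ℝ × ℝ) × ℝ → ℝ) (hf : Measurable f) :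
      Measurable fun z : (ℝ × ℝ) × ℝ => if z.2 < f z then (1 : ℝ) else 0 :=
    Measurable.ite (measurableSet_lt measurable_snd hf) measurable_const measurable_const
  exact (hlt _ measurable_fst.fst).sub (hlt _ measurable_fst.snd)

lemma integral_cutDiff_mul_cutDiff (p : ℝ × ℝ) :
    ∫ q : ℝ × ℝ, cutDiff p q.1 * cutDiff p q.2 = (p.1 - p.2) ^ 2 := by
  rw [Measure.volume_eq_prod, integral_prod_mul, integral_cutDiff, sq]

lemma cutDiff_mul_cutDiff (p : ℝ × ℝ) (s t : ℝ) :
    cutDiff p s * cutDiff p t =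
      (Ioi (max s t) ×ˢ univ).indicator 1 p + (univ ×ˢ Ioi (max s t)).indicator 1 p
        - (Ioi s ×ˢ Ioi t).indicator 1 p - (Ioi t ×ˢ Ioi s).indicator 1 p := by
  simp only [cutDiff, indicator_apply, mem_prod, mem_Ioi, mem_univ, max_lt_iff, and_true,
    true_and, Pi.one_apply]
  by_cases h₁ : s < p.1 <;> by_cases h₂ : t < p.1 <;> by_cases h₃ : s < p.2 <;>
    by_cases h₄ : t < p.2 <;> simp [h₁, h₂, h₃, h₄]

def cutCov (γ : Measure (ℝ × ℝ)) (q : ℝ × ℝ) : ℝ := ∫ p, cutDiff p q.1 * cutDiff p q.2 ∂γ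

section CutCov

variable (γ : Measure (ℝ × ℝ))

lemma integrable_cutDiff_mul_cutDiff_prod [SFinite γ]
    (hint : Integrable (fun p : ℝ × ℝ => (p.1 - p.2) ^ 2) γ) :
    Integrable (fun z : (ℝ × ℝ) × (ℝ × ℝ) => cutDiff z.1 z.2.1 * cutDiff z.1 z.2.2)
      (γ.prod volume) := by
  have hmeas : Measurable (fun z : (ℝ × ℝ) × (ℝ × ℝ) => cutDiff z.1 z.2.1 * cutDiff z.1 z.2.2) :=
    (measurable_uncurry_cutDiff.comp (measurable_fst.prodMk measurable_snd.fst)).mul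
      (measurable_uncurry_cutDiff.comp (measurable_fst.prodMk measurable_snd.snd))
  refine (integrable_prod_iff hmeas.aestronglyMeasurable).2 ⟨ae_of_all _ fun p => ?_, ?_⟩
  · rw [Measure.volume_eq_prod]
    exact (integrable_cutDiff p).mul_prod (integrable_cutDiff p)
  · refine hint.congr (ae_of_all _ fun p => ?_)
    simp only [norm_mul, Real.norm_eq_abs]
    rw [Measure.volume_eq_prod, integral_prod_mul (fun s => |cutDiff p s|) (fun s => |cutDiff p s|),
      integral_abs_cutDiff, ← sq, sq_abs]

lemma integral_sq_sub_eq_integral_cutCov [SFinite γ]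
    (hint : Integrable (fun p : ℝ × ℝ => (p.1 - p.2) ^ 2) γ) :
    ∫ p, (p.1 - p.2) ^ 2 ∂γ = ∫ q, cutCov γ q := by
  simp_rw [← integral_cutDiff_mul_cutDiff]
  exact integral_integral_swap (integrable_cutDiff_mul_cutDiff_prod γ hint)

lemma integrable_cutCov [SFinite γ] (hint : Integrable (fun p : ℝ × ℝ => (p.1 - p.2) ^ 2) γ) :
    Integrable (cutCov γ) :=
  (integrable_cutDiff_mul_cutDiff_prod γ hint).integral_prod_right

end CutCov

lemma cutCov_eq (γ : Measure (ℝ × ℝ)) [IsFiniteMeasure γ] (s t : ℝ) :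
    cutCov γ (s, t) = (γ.map Prod.fst).real (Ioi (max s t)) + (γ.map Prod.snd).real (Ioi (max s t))
      - γ.real (Ioi s ×ˢ Ioi t) - γ.real (Ioi t ×ˢ Ioi s) := by
  have hI {S : Set (ℝ × ℝ)} (hS : MeasurableSet S) : Integrable (S.indicator 1) γ :=
    (integrable_const (1 : ℝ)).indicator hS
  have hfst : MeasurableSet (Ioi (max s t) ×ˢ (univ : Set ℝ)) := measurableSet_Ioi.prod .univ
  have hsnd : MeasurableSet ((univ : Set ℝ) ×ˢ Ioi (max s t)) :=
    MeasurableSet.univ.prod measurableSet_Ioi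
  have hst : MeasurableSet (Ioi s ×ˢ Ioi t) := measurableSet_Ioi.prod measurableSet_Ioi
  have hts : MeasurableSet (Ioi t ×ˢ Ioi s) := measurableSet_Ioi.prod measurableSet_Ioi
  simp only [cutCov, cutDiff_mul_cutDiff]
  rw [integral_sub ?_ (hI hts), integral_sub ?_ (hI hst), integral_add (hI hfst) (hI hsnd),
    integral_indicator_one hfst, integral_indicator_one hsnd, integral_indicator_one hst,
    integral_indicator_one hts, map_measureReal_apply measurable_fst measurableSet_Ioi,
    map_measureReal_apply measurable_snd measurableSet_Ioi, prod_univ, univ_prod]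
  · exact (hI hfst).add (hI hsnd)
  · exact ((hI hfst).add (hI hsnd)).sub (hI hst)

lemma cutCov_le_of_measure_Ioi_prod_Ioi_le {γ γ' : Measure (ℝ × ℝ)} [IsFiniteMeasure γ]
    [IsFiniteMeasure γ'] (hfst : γ.map Prod.fst = γ'.map Prod.fst)
    (hsnd : γ.map Prod.snd = γ'.map Prod.snd)
    (hquad : ∀ s t : ℝ, γ (Ioi s ×ˢ Ioi t) ≤ γ' (Ioi s ×ˢ Ioi t)) (q : ℝ × ℝ) :
    cutCov γ' q ≤ cutCov γ q := by
  have hreal (s t : ℝ) : γ.real (Ioi s ×ˢ Ioi t) ≤ γ'.real (Ioi s ×ˢ Ioi t) :=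
    ENNReal.toReal_mono (measure_ne_top _ _) (hquad s t)
  rw [cutCov_eq, cutCov_eq, hfst, hsnd]
  linarith [hreal q.1 q.2, hreal q.2 q.1]

lemma integral_sq_sub_le_of_measure_Ioi_prod_Ioi_le {γ γ' : Measure (ℝ × ℝ)} [IsFiniteMeasure γ]
    [IsFiniteMeasure γ'] (hfst : γ.map Prod.fst = γ'.map Prod.fst)
    (hsnd : γ.map Prod.snd = γ'.map Prod.snd)
    (hquad : ∀ s t : ℝ, γ (Ioi s ×ˢ Ioi t) ≤ γ' (Ioi s ×ˢ Ioi t))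
    (hint : Integrable (fun p : ℝ × ℝ => (p.1 - p.2) ^ 2) γ)
    (hint' : Integrable (fun p : ℝ × ℝ => (p.1 - p.2) ^ 2) γ') :
    ∫ p, (p.1 - p.2) ^ 2 ∂γ' ≤ ∫ p, (p.1 - p.2) ^ 2 ∂γ := by
  rw [integral_sq_sub_eq_integral_cutCov γ hint, integral_sq_sub_eq_integral_cutCov γ' hint']
  exact integral_mono (integrable_cutCov γ' hint') (integrable_cutCov γ hint)
    (cutCov_le_of_measure_Ioi_prod_Ioi_le hfst hsnd hquad)

lemma measure_Ioi_prod_Ioi_le_min (γ : Measure (ℝ × ℝ)) (s t : ℝ) :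
    γ (Ioi s ×ˢ Ioi t) ≤ min (γ.map Prod.fst (Ioi s)) (γ.map Prod.snd (Ioi t)) := by
  rw [Measure.map_apply measurable_fst measurableSet_Ioi,
    Measure.map_apply measurable_snd measurableSet_Ioi]
  exact le_min (measure_mono fun p hp => hp.1) (measure_mono fun p hp => hp.2)

lemma integrable_sq_sub_of_integrable_map {γ : Measure (ℝ × ℝ)}
    (h₁ : Integrable (fun x : ℝ => x ^ 2) (γ.map Prod.fst))
    (h₂ : Integrable (fun x : ℝ => x ^ 2) (γ.map Prod.snd)) :
    Integrable (fun p : ℝ × ℝ => (p.1 - p.2) ^ 2) γ := by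
  refine Integrable.mono' (((h₁.comp_measurable measurable_fst).const_mul 2).add
    ((h₂.comp_measurable measurable_snd).const_mul 2)) (by fun_prop) (ae_of_all _ fun p => ?_)
  simp only [Real.norm_eq_abs, abs_sq, Function.comp_apply, Pi.add_apply]
  nlinarith [sq_nonneg (p.1 + p.2)]

section QuantileCoupling

variable (μ ν : Measure ℝ) [IsProbabilityMeasure μ] [IsProbabilityMeasure ν]

def quantileCoupling : Measure (ℝ × ℝ) :=
  (volume.restrict (Ioo 0 1)).map fun u => (quantile μ u, quantile ν u)

lemma aemeasurable_quantile_prodMk :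
    AEMeasurable (fun u => (quantile μ u, quantile ν u)) (volume.restrict (Ioo 0 1)) :=
  (aemeasurable_quantile μ).prodMk (aemeasurable_quantile ν)

instance : IsProbabilityMeasure (quantileCoupling μ ν) :=
  Measure.isProbabilityMeasure_map (aemeasurable_quantile_prodMk μ ν)

lemma quantileCoupling_map_fst : (quantileCoupling μ ν).map Prod.fst = μ := by
  rw [quantileCoupling, AEMeasurable.map_map_of_aemeasurable measurable_fst.aemeasurable
    (aemeasurable_quantile_prodMk μ ν)]
  exact map_quantile μ

lemma quantileCoupling_map_snd : (quantileCoupling μ ν).map Prod.snd = ν := by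
  rw [quantileCoupling, AEMeasurable.map_map_of_aemeasurable measurable_snd.aemeasurable
    (aemeasurable_quantile_prodMk μ ν)]
  exact map_quantile ν

lemma quantileCoupling_Ioi_prod_Ioi (s t : ℝ) :
    quantileCoupling μ ν (Ioi s ×ˢ Ioi t) = min (μ (Ioi s)) (ν (Ioi t)) := by
  rw [quantileCoupling, Measure.map_apply_of_aemeasurable (aemeasurable_quantile_prodMk μ ν)
    (measurableSet_Ioi.prod measurableSet_Ioi), Measure.restrict_apply' measurableSet_Ioo,
    mk_preimage_prod, inter_inter_distrib_right, preimage_quantile_Ioi_inter_Ioo,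
    preimage_quantile_Ioi_inter_Ioo, Ioo_inter_Ioo, min_self, Real.volume_Ioo,
    measure_Ioi_eq_ofReal_one_sub_cdf, measure_Ioi_eq_ofReal_one_sub_cdf, ← ENNReal.ofReal_min,
    min_sub_sub_left]

lemma integral_sq_sub_quantileCoupling :
    ∫ p, (p.1 - p.2) ^ 2 ∂quantileCoupling μ ν =
      ∫ t in Ioo 0 1, (quantile μ t - quantile ν t) ^ 2 :=
  integral_map (aemeasurable_quantile_prodMk μ ν) (by fun_prop)

end QuantileCoupling

/-- the coupling definition of `W₂²` equals the squared `L²(0,1)` distance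
between quantile functions. -/
theorem stmt0 (μ ν : Measure ℝ) [IsProbabilityMeasure μ] [IsProbabilityMeasure ν]
    (hμ : Integrable (fun x => x^2) μ) (hν : Integrable (fun x => x^2) ν) :
    W2sqCoupling μ ν = ∫ t in Set.Ioo (0:ℝ) 1, (quantile μ t - quantile ν t)^2 := by
  have hcost {γ : Measure (ℝ × ℝ)} (h₁ : γ.map Prod.fst = μ) (h₂ : γ.map Prod.snd = ν) :
      Integrable (fun p : ℝ × ℝ => (p.1 - p.2) ^ 2) γ :=
    integrable_sq_sub_of_integrable_map (h₁ ▸ hμ) (h₂ ▸ hν)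
  have hfst := quantileCoupling_map_fst μ ν
  have hsnd := quantileCoupling_map_snd μ ν
  rw [← integral_sq_sub_quantileCoupling]
  refine IsLeast.csInf_eq ⟨⟨quantileCoupling μ ν, inferInstance, hfst, hsnd, rfl⟩, ?_⟩
  rintro _ ⟨γ, _, h₁, h₂, rfl⟩
  refine integral_sq_sub_le_of_measure_Ioi_prod_Ioi_le (h₁.trans hfst.symm) (h₂.trans hsnd.symm)
    (fun s t => ?_) (hcost h₁ h₂) (hcost hfst hsnd)
  rw [quantileCoupling_Ioi_prod_Ioi, ← h₁, ← h₂]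
  exact measure_Ioi_prod_Ioi_le_min γ s t
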